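/- Define g₁(K) = (2K−1)(1−1/(2K))^K((2K/(2K−1))^K − 1) − ((2K²−3K+1)/(2K²))^K · ((2K−1)K/(K−1)) · (1 − (2(K−1)/(2K−1))^K). Then g₁(K)/(2K) converges to (e^{−1}−e^{−1/2})(e^{−1}−e^{1/2}) as K → ∞. -/

import Mathlib

open Real Filter

/-- g₁ from the finite-range QFI computation. -/
noncomputable def g₁ (K : ℕ) : ℝ :=
  (2 * (K : ℝ) - 1) * (1 - 1 / (2 * (K : ℝ))) ^ K *
      ((2 * (K : ℝ) / (2 * (K : ℝ) - 1)) ^ K - 1) -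
    ((2 * (K : ℝ) ^ 2 - 3 * K + 1) / (2 * (K : ℝ) ^ 2)) ^ K *
      ((2 * (K : ℝ) - 1) * K / ((K : ℝ) - 1)) *
      (1 - (2 * ((K : ℝ) - 1) / (2 * (K : ℝ) - 1)) ^ K)

/-!
Every power in `g₁ K` is a product or quotient of `a = (1 - 1/(2K))^K → e^{-1/2}` and
`b = (1 - 1/K)^K → e^{-1}`. In these terms `g₁ K / (2K)` is a rational expression in `a`, `b`
and `1/K` that is continuous at the limit point, and with `u = e^{-1/2}` the limit value
`1 - u - u²(u - u²)` factors as `(u² - u)(u² - u⁻¹)`.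
-/

theorem tendsto_one_sub_div_pow_exp_neg (t : ℝ) :
    Tendsto (fun n : ℕ => (1 - t / n) ^ n) atTop (nhds (exp (-t))) := by
  simpa only [neg_div, ← sub_eq_add_neg] using tendsto_one_add_div_pow_exp (-t)

theorem tendsto_one_sub_div_nat (t : ℝ) :
    Tendsto (fun n : ℕ => 1 - t / n) atTop (nhds 1) := by
  simpa using tendsto_const_nhds.sub (tendsto_const_div_atTop_nhds_zero_nat t)

theorem g₁_div_eq {K : ℕ} (hK : 1 < K) :
    g₁ K / (2 * (K : ℝ)) =
      (1 - (1 / 2) / K) * (1 - (1 - (1 / 2) / K) ^ K) -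
        (1 - (1 / 2) / K) / (1 - 1 / K) *
          ((1 - 1 / K) ^ K * ((1 - (1 / 2) / K) ^ K - (1 - 1 / K) ^ K)) := by
  have hx : (1 : ℝ) < K := by exact_mod_cast hK
  rw [g₁]
  set x : ℝ := (K : ℝ)
  have ha : 1 - 1 / (2 * x) = 1 - (1 / 2) / x := by ring
  have ha_inv : 2 * x / (2 * x - 1) = (1 - (1 / 2) / x)⁻¹ := by
    field_simp
  have hab : (2 * x ^ 2 - 3 * x + 1) / (2 * x ^ 2) = (1 - (1 / 2) / x) * (1 - 1 / x) := by
    field_simp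
    ring
  have hb_div_a : 2 * (x - 1) / (2 * x - 1) = (1 - 1 / x) / (1 - (1 / 2) / x) := by
    field_simp
  have ha_pos : 0 < 1 - (1 / 2) / x := by
    rw [sub_pos, div_lt_one (by linarith)]
    linarith
  rw [ha, ha_inv, hab, hb_div_a, inv_pow, mul_pow, div_pow]
  have ha_pow_ne : (1 - (1 / 2) / x) ^ K ≠ 0 := pow_ne_zero _ ha_pos.ne'
  generalize (1 - (1 / 2) / x) ^ K = a at ha_pow_ne ⊢
  generalize (1 - 1 / x) ^ K = b
  field_simp

theorem exp_neg_half_identity :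
    (1 - exp (-(1 / 2))) - exp (-1) * (exp (-(1 / 2)) - exp (-1)) =
      (exp (-1) - exp (-(1 / 2))) * (exp (-1) - exp (1 / 2)) := by
  set u := exp (-(1 / 2))
  have hu : u ≠ 0 := exp_ne_zero _
  have h_sq : exp (-1) = u ^ 2 := by rw [← exp_nat_mul]; norm_num
  have h_inv : exp (1 / 2) = u⁻¹ := by rw [← exp_neg, neg_neg]
  rw [h_sq, h_inv]
  field_simp
  ring

/-- g₁(K)/(2K) → (e⁻¹ − e^{−1/2})(e⁻¹ − e^{1/2}) as K → ∞. -/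
theorem stmt_13 :
    Tendsto (fun K : ℕ => g₁ K / (2 * (K : ℝ)))
      atTop (nhds ((Real.exp (-1) - Real.exp (-(1 / 2))) *
        (Real.exp (-1) - Real.exp (1 / 2)))) := by
  have ha := tendsto_one_sub_div_pow_exp_neg (1 / 2)
  have hb := tendsto_one_sub_div_pow_exp_neg 1
  have hlim :=
    ((tendsto_one_sub_div_nat (1 / 2)).mul ((tendsto_const_nhds (x := (1 : ℝ))).sub ha)).sub
      (((tendsto_one_sub_div_nat (1 / 2)).div (tendsto_one_sub_div_nat 1) one_ne_zero).mul
        (hb.mul (ha.sub hb)))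
  rw [one_mul, div_one, one_mul, exp_neg_half_identity] at hlim
  refine hlim.congr' ?_
  filter_upwards [eventually_gt_atTop 1] with K hK
  exact (g₁_div_eq hK).symm
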